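/- Let Y be an elliptic curve over an algebraically closed field of characteristic p > 0. Let L₁, …, L_λ be degree-0 line bundles on Y generating a subgroup G of Pic⁰(Y), and for m ≥ 0 set G(m) := { L₁^{m₁} ⊗ ⋯ ⊗ L_λ^{m_λ} : |m₁| + ⋯ + |m_λ| ≤ m }. Suppose there exist integers ν ≥ 0 and, for infinitely many e, integers q_e with p^e − q_e > ν, such that L_j^{p^e} ∈ G(q_e + ν) for every j = 1, …, λ. Then G = G(λ(p^e − 1)) for any such e; in particular G is a finite group. -/
import Mathlib


open scoped BigOperators

/-- The set of words of length at most `m` in the generators `L j` and their inverses,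
inside an abelian group `A` (standing for `Pic⁰` of an elliptic curve). -/
def WordSet {A : Type*} [CommGroup A] {lam : ℕ} (L : Fin lam → A) (m : ℕ) : Set A :=
  {x | ∃ c : Fin lam → ℤ, (∑ j, (c j).natAbs) ≤ m ∧ x = ∏ j, L j ^ (c j)}

lemma word_mem_closure {A : Type*} [CommGroup A] {lam : ℕ} (L : Fin lam → A)
    (c : Fin lam → ℤ) : (∏ j, L j ^ (c j)) ∈ Subgroup.closure (Set.range L) :=
  Subgroup.prod_mem _ fun j _ =>
    Subgroup.zpow_mem _ (Subgroup.subset_closure (Set.mem_range_self j)) _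

lemma mem_closure_iff_word {A : Type*} [CommGroup A] {lam : ℕ} (L : Fin lam → A)
    (x : A) : x ∈ Subgroup.closure (Set.range L) ↔ ∃ c : Fin lam → ℤ, x = ∏ j, L j ^ (c j) := by
  constructor
  · intro hx
    induction hx using Subgroup.closure_induction with
    | mem y hy =>
      obtain ⟨j, rfl⟩ := hy
      refine ⟨fun i => if i = j then 1 else 0, ?_⟩
      have h : ∀ i : Fin lam, L i ^ (if i = j then (1:ℤ) else 0) = if i = j then L i else 1 := by
        intro i; split <;> simp
      rw [Finset.prod_congr rfl fun i _ => h i, Finset.prod_ite_eq']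
      simp
    | one => exact ⟨0, by simp⟩
    | mul a b _ _ ha hb =>
      obtain ⟨ca, rfl⟩ := ha
      obtain ⟨cb, rfl⟩ := hb
      exact ⟨ca + cb, by simp [zpow_add, Finset.prod_mul_distrib]⟩
    | inv a _ ha =>
      obtain ⟨ca, rfl⟩ := ha
      refine ⟨-ca, ?_⟩
      rw [← Finset.prod_inv_distrib]
      simp [zpow_neg]
  · rintro ⟨c, rfl⟩
    exact word_mem_closure L c

lemma reduce_word {A : Type*} [CommGroup A] {lam : ℕ} (L : Fin lam → A) (P νq : ℕ)
    (hP : νq < P)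
    (hrel : ∀ j, (L j) ^ P ∈ WordSet L νq) :
    ∀ (n : ℕ) (c : Fin lam → ℤ), (∑ j, (c j).natAbs) ≤ n →
      (∏ j, L j ^ (c j)) ∈ WordSet L (lam * (P - 1)) := by
  intro n
  induction n using Nat.strong_induction_on with
  | _ n IH =>
    intro c hc
    by_cases hbig : ∃ j, P ≤ (c j).natAbs
    · obtain ⟨j0, hj0⟩ := hbig
      set s : ℤ := if 0 ≤ c j0 then 1 else -1 with hs
      obtain ⟨d, hd, hdx⟩ := hrel j0
      set u : Fin lam → ℤ := Function.update c j0 (c j0 - s * P) with hu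
      set c' : Fin lam → ℤ := fun j => u j + d j * s with hc'
      have hsabs : s.natAbs = 1 := by
        rw [hs]; split <;> simp
      have huj0 : (u j0).natAbs + P = (c j0).natAbs := by
        rw [hu, Function.update_self, hs]
        split <;> omega
      -- product equality
      have hprod : (∏ j, L j ^ (c j)) = ∏ j, L j ^ (c' j) := by
        have step1 : ∀ j, c j = u j + (if j = j0 then s * P else 0) := by
          intro j
          by_cases h : j = j0 <;> simp [hu, Function.update, h]
        calc ∏ j, L j ^ (c j)
            = ∏ j, (L j ^ (u j) * L j ^ (if j = j0 then s * (P:ℤ) else 0)) := by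
              refine Finset.prod_congr rfl fun j _ => ?_
              rw [← zpow_add, ← step1 j]
          _ = (∏ j, L j ^ (u j)) * ∏ j, L j ^ (if j = j0 then s * (P:ℤ) else 0) := by
              rw [Finset.prod_mul_distrib]
          _ = (∏ j, L j ^ (u j)) * L j0 ^ (s * (P:ℤ)) := by
              congr 1
              have : ∀ j, L j ^ (if j = j0 then s * (P:ℤ) else 0)
                  = if j = j0 then L j ^ (s * (P:ℤ)) else 1 := by
                intro j; split <;> simp
              rw [Finset.prod_congr rfl fun j _ => this j,
                Finset.prod_ite_eq' Finset.univ j0 (fun j => L j ^ (s * (P:ℤ)))]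
              simp
          _ = (∏ j, L j ^ (u j)) * ((L j0) ^ P) ^ s := by
              rw [mul_comm s (P:ℤ), zpow_mul, zpow_natCast]
          _ = (∏ j, L j ^ (u j)) * (∏ j, L j ^ (d j)) ^ s := by rw [hdx]
          _ = (∏ j, L j ^ (u j)) * ∏ j, L j ^ (d j * s) := by
              congr 1
              rw [← Finset.prod_zpow]
              exact Finset.prod_congr rfl fun j _ => by rw [zpow_mul]
          _ = ∏ j, L j ^ (c' j) := by
              rw [← Finset.prod_mul_distrib]
              exact Finset.prod_congr rfl fun j _ => by rw [hc', zpow_add]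
      -- sum bound
      have hsumu : (∑ j, (u j).natAbs) + P = ∑ j, (c j).natAbs := by
        have key : (fun j => (u j).natAbs)
            = Function.update (fun j => (c j).natAbs) j0 ((u j0).natAbs) := by
          funext j
          by_cases h : j = j0 <;> simp [hu, Function.update, h]
        have h1 : ∑ j, (u j).natAbs
            = (u j0).natAbs + ∑ j ∈ Finset.univ \ {j0}, (c j).natAbs := by
          have h0 := Finset.sum_update_of_mem (Finset.mem_univ j0)
            (fun j => (c j).natAbs) ((u j0).natAbs)
          rw [← key] at h0
          simpa using h0
        have h2 : ∑ j, (c j).natAbs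
            = (c j0).natAbs + ∑ j ∈ Finset.univ \ {j0}, (c j).natAbs := by
          rw [Finset.sdiff_singleton_eq_erase]
          exact (Finset.add_sum_erase _ _ (Finset.mem_univ j0)).symm
        omega
      have hsum' : (∑ j, (c' j).natAbs) ≤ (∑ j, (u j).natAbs) + ∑ j, (d j).natAbs := by
        rw [← Finset.sum_add_distrib]
        refine Finset.sum_le_sum fun j _ => ?_
        calc (u j + d j * s).natAbs ≤ (u j).natAbs + (d j * s).natAbs :=
              Int.natAbs_add_le _ _
          _ = (u j).natAbs + (d j).natAbs := by rw [Int.natAbs_mul, hsabs, mul_one]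
      have hlt : (∑ j, (c' j).natAbs) < n := by omega
      rw [hprod]
      exact IH _ hlt c' le_rfl
    · push_neg at hbig
      refine ⟨c, ?_, rfl⟩
      have hb := Finset.sum_le_card_nsmul Finset.univ (fun j => (c j).natAbs) (P - 1)
        (fun j _ => by show (c j).natAbs ≤ P - 1; have := hbig j; omega)
      simpa [mul_comm] using hb

/-- Length reduction in `Pic⁰` of an elliptic curve in characteristic `p`:
if for (infinitely many) `e` there are `q_e` with `p^e − q_e > ν` such that
`L_j^{p^e} ∈ G(q_e + ν)` for all `j`, then the subgroup `G` generated by the `L_j`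
equals `G(λ(p^e − 1))` for any such `e`; in particular `G` is finite. -/
theorem stmt17 (p : ℕ) (hp : p.Prime) (A : Type*) [CommGroup A]
    (lam : ℕ) (L : Fin lam → A)
    (ν : ℕ) (S : Set ℕ) (hS : S.Infinite) (q : ℕ → ℕ)
    (hq : ∀ e ∈ S, q e + ν < p ^ e ∧
      ∀ j : Fin lam, (L j) ^ (p ^ e) ∈ WordSet L (q e + ν)) :
    (∀ e ∈ S, (Subgroup.closure (Set.range L) : Set A) = WordSet L (lam * (p ^ e - 1))) ∧
      (Subgroup.closure (Set.range L) : Set A).Finite := by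
  have main : ∀ e ∈ S, (Subgroup.closure (Set.range L) : Set A)
      = WordSet L (lam * (p ^ e - 1)) := by
    intro e he
    obtain ⟨h1, h2⟩ := hq e he
    ext x
    constructor
    · intro hx
      obtain ⟨c, rfl⟩ := (mem_closure_iff_word L x).mp hx
      exact reduce_word L (p ^ e) (q e + ν) h1 h2 _ c le_rfl
    · rintro ⟨c, _, rfl⟩
      exact word_mem_closure L c
  refine ⟨main, ?_⟩
  obtain ⟨e, he⟩ := hS.nonempty
  rw [main e he]
  set M := lam * (p ^ e - 1)
  have hsub : WordSet L M ⊆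
      (fun c : Fin lam → ℤ => ∏ j, L j ^ (c j) : (Fin lam → ℤ) → A) ''
        (Set.pi Set.univ fun _ => Set.Icc (-(M:ℤ)) (M:ℤ)) := by
    rintro x ⟨c, hc, rfl⟩
    refine ⟨c, fun j _ => ?_, rfl⟩
    have hj : (c j).natAbs ≤ M :=
      le_trans (Finset.single_le_sum (f := fun j => (c j).natAbs)
        (fun i _ => Nat.zero_le _) (Finset.mem_univ j)) hc
    constructor <;> omega
  exact Set.Finite.subset
    (Set.Finite.image _ (Set.Finite.pi fun _ => Set.finite_Icc _ _)) hsub
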